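/- arXiv:2207.05887 — 4 statements merged into one kernel-verified Lean document; each statement's English description precedes it below -/
import Mathlib

section
/- Let α ∈ (0,1] and let x₀ ∈ (-1, 0]. Then for every real x ≥ x₀, one has (1+x)^(-α) ≤ 1 - α·x + (α(α+1)/2)·x²·(1+x₀)^(-(α+2)). -/
/-!
With `c = α(α+1)/2 · (1+x₀)^(-(α+2))`, the function `t ↦ c t² - (1+t)^(-α)` has second derivative
`α(α+1) ((1+x₀)^(-(α+2)) - (1+t)^(-(α+2)))`, which is nonnegative for `t ≥ x₀` because
`t ↦ (1+t)^(-(α+2))` is decreasing. So this function is convex on `[x₀, ∞)`, and the bound is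
the statement that it lies above its tangent line at `0 ∈ [x₀, ∞)`.
-/

open Real Set

theorem ConvexOn.add_mul_sub_le_of_hasDerivAt {S : Set ℝ} {f : ℝ → ℝ} {a x f' : ℝ}
    (hf : ConvexOn ℝ S f) (ha : a ∈ S) (hx : x ∈ S) (hf' : HasDerivAt f f' a) :
    f a + f' * (x - a) ≤ f x := by
  rcases lt_trichotomy a x with hax | rfl | hxa
  · have hslope := hf.le_slope_of_hasDerivAt ha hx hax hf'
    rw [slope_def_field, le_div_iff₀ (sub_pos.2 hax)] at hslope
    linarith
  · simp
  · have hslope := hf.slope_le_of_hasDerivAt hx ha hxa hf'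
    rw [slope_def_field, div_le_iff₀ (sub_pos.2 hxa)] at hslope
    linarith

theorem hasDerivAt_one_add_rpow (p : ℝ) {t : ℝ} (ht : -1 < t) :
    HasDerivAt (fun t => (1 + t) ^ p) (p * (1 + t) ^ (p - 1)) t := by
  simpa using ((hasDerivAt_id' t).const_add 1).rpow_const (p := p) (Or.inl (by linarith))

theorem convexOn_mul_sq_sub_one_add_rpow_neg {α x₀ : ℝ} (hα : 0 ≤ α) (hx₀ : -1 < x₀) :
    ConvexOn ℝ (Ici x₀)
      (fun t => α * (α + 1) / 2 * (1 + x₀) ^ (-(α + 2)) * t ^ 2 - (1 + t) ^ (-α)) := by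
  set C := (1 + x₀) ^ (-(α + 2))
  have hpos : ∀ t ∈ Ici x₀, -1 < t := fun t ht => hx₀.trans_le ht
  have hf' : ∀ t ∈ Ici x₀, HasDerivAt
      (fun t => α * (α + 1) / 2 * C * t ^ 2 - (1 + t) ^ (-α))
      (α * (α + 1) * C * t + α * (1 + t) ^ (-α - 1)) t := by
    intro t ht
    refine (((hasDerivAt_pow 2 t).const_mul (α * (α + 1) / 2 * C)).sub
      (hasDerivAt_one_add_rpow (-α) (hpos t ht))).congr_deriv ?_
    push_cast
    ring
  have hf'' : ∀ t ∈ Ici x₀, HasDerivAt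
      (fun t => α * (α + 1) * C * t + α * (1 + t) ^ (-α - 1))
      (α * (α + 1) * (C - (1 + t) ^ (-(α + 2)))) t := by
    intro t ht
    refine (((hasDerivAt_id' t).const_mul (α * (α + 1) * C)).add
      ((hasDerivAt_one_add_rpow (-α - 1) (hpos t ht)).const_mul α)).congr_deriv ?_
    rw [show -α - 1 - 1 = -(α + 2) by ring]
    ring
  refine convexOn_of_hasDerivWithinAt2_nonneg (convex_Ici x₀)
    (fun t ht => (hf' t ht).continuousAt.continuousWithinAt)
    (fun t ht => (hf' t (interior_subset ht)).hasDerivWithinAt)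
    (fun t ht => (hf'' t (interior_subset ht)).hasDerivWithinAt) fun t ht => ?_
  have hdecr : (1 + t) ^ (-(α + 2)) ≤ C :=
    rpow_le_rpow_of_nonpos (by linarith) (by linarith [mem_Ici.1 (interior_subset ht)])
      (by linarith)
  exact mul_nonneg (by positivity) (sub_nonneg.2 hdecr)

theorem one_add_rpow_neg_le_quadratic_general (α x₀ : ℝ) (hα0 : 0 < α)
    (hx₀ : x₀ ∈ Set.Ioc (-1 : ℝ) 0) :
    ∀ x : ℝ, x₀ ≤ x →
      (1 + x) ^ (-α) ≤
        1 - α * x + (α * (α + 1) / 2) * x ^ 2 * (1 + x₀) ^ (-(α + 2)) := by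
  intro x hx
  have tangent : -1 + α * x ≤
      α * (α + 1) / 2 * (1 + x₀) ^ (-(α + 2)) * x ^ 2 - (1 + x) ^ (-α) := by
    simpa using (convexOn_mul_sq_sub_one_add_rpow_neg hα0.le hx₀.1).add_mul_sub_le_of_hasDerivAt
      (mem_Ici.2 hx₀.2) (mem_Ici.2 hx)
      (((hasDerivAt_pow 2 0).const_mul _).sub (hasDerivAt_one_add_rpow (-α) (by norm_num)))
  linarith

/-- Uniform quadratic upper bound from the Lagrange remainder: for `α ∈ (0,1]`,
`x₀ ∈ (-1, 0]`, and every `x ≥ x₀`,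
`(1+x)^(-α) ≤ 1 - α·x + (α(α+1)/2)·x²·(1+x₀)^(-(α+2))`. -/
theorem one_add_rpow_neg_le_quadratic (α x₀ : ℝ) (hα0 : 0 < α) (hα1 : α ≤ 1)
    (hx₀ : x₀ ∈ Set.Ioc (-1 : ℝ) 0) :
    ∀ x : ℝ, x₀ ≤ x →
      (1 + x) ^ (-α) ≤
        1 - α * x + (α * (α + 1) / 2) * x ^ 2 * (1 + x₀) ^ (-(α + 2)) :=
  one_add_rpow_neg_le_quadratic_general α x₀ hα0 hx₀
end

section
/- Let n ≥ 1, let A be an n×n real symmetric matrix with nonnegative entries and zero diagonal, let β ≥ 0 and α ∈ [0,1], and set Â = A + β·I and d_u = Σ_v A_{uv}; assume d_v ≥ 1 for every node v. Let Z ∈ ℝ^{n×p} have all entries nonnegative, and let S be the symmetrized convolution operator S_{uv} = Â_{uv}/((d_u+β)^α (d_v+β)^α). Then every entry of SZ is nonnegative, and for every node u and coordinate j, (SZ)_{uj} ≤ ‖Z‖_∞ · ( (d_u+β)^{1-2α} - α·Δ̄_u·(d_u+β)^{-2α} + (α(α+1)M/2)·Δ̄²_u·(d_u+β)^{-1-2α}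 ), where Δ̄_u = Σ_v Â_{uv}(d_v - d_u)/(d_u+β), Δ̄²_u = Σ_v Â_{uv}(d_v - d_u)²/(d_u+β), M = ((d_max+β)/(1+β))^{α+2}, d_max = max_v d_v, and ‖Z‖_∞ = max_{v,j} Z_{vj}. -/
open Real Finset

/-!
Each entry of `S Z` is at most `‖Z‖_∞` times the `u`-th row sum of `S`, which equals
`a^{-α} ∑_v Â_{uv} x_v^{-α}` with `a = d_u + β` and `x_v = d_v + β`. Expand `t ↦ t^{-α}` to second
order around `a`: on `[1 + β, ∞)`, where all the `x_v` lie, its second derivative is at most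
`α(α+1)(1+β)^{-α-2} ≤ α(α+1) M a^{-α-2}`, so it lies below its tangent at `a` plus that bound
times `(t - a)²/2`. Summing against the weights `Â_{uv}`, whose total is `a`, turns the linear and
quadratic terms into `Δ̄_u` and `Δ̄²_u`.
-/

theorem ConvexOn.add_deriv_mul_sub_le {S : Set ℝ} {f : ℝ → ℝ} {f' x y : ℝ}
    (hf : ConvexOn ℝ S f) (hx : x ∈ S) (hy : y ∈ S) (hf' : HasDerivAt f f' x) :
    f x + f' * (y - x) ≤ f y := by
  rcases lt_trichotomy x y with hxy | rfl | hyx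
  · have := hf.le_slope_of_hasDerivAt hx hy hxy hf'
    rw [slope_def_field, le_div_iff₀ (sub_pos.2 hxy)] at this
    linarith
  · simp
  · have := hf.slope_le_of_hasDerivAt hy hx hyx hf'
    rw [slope_def_field, div_le_iff₀ (sub_pos.2 hyx)] at this
    linear_combination this

theorem Convex.le_add_deriv_mul_sub_add_sq {S : Set ℝ} (hS : Convex ℝ S) {f f' f'' : ℝ → ℝ}
    {K x y : ℝ} (hf : ∀ z ∈ S, HasDerivAt f (f' z) z) (hf' : ∀ z ∈ S, HasDerivAt f' (f'' z) z)
    (hK : ∀ z ∈ S, f'' z ≤ K) (hx : x ∈ S) (hy : y ∈ S) :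
    f y ≤ f x + f' x * (y - x) + K / 2 * (y - x) ^ 2 := by
  -- `z ↦ K/2 z² - f z` is convex and lies above its tangent at `x`.
  have hg : ∀ z ∈ S, HasDerivAt (fun z => K / 2 * z ^ 2 - f z) (K * z - f' z) z := fun z hz => by
    refine (((hasDerivAt_pow 2 z).const_mul (K / 2)).sub (hf z hz)).congr_deriv ?_
    ring
  have hg' : ∀ z ∈ S, HasDerivAt (fun z => K * z - f' z) (K - f'' z) z := fun z hz => by
    refine (((hasDerivAt_id z).const_mul K).sub (hf' z hz)).congr_deriv ?_
    ring
  have hconv : ConvexOn ℝ S fun z => K / 2 * z ^ 2 - f z :=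
    convexOn_of_hasDerivWithinAt2_nonneg hS
      (fun z hz => (hg z hz).continuousAt.continuousWithinAt)
      (fun z hz => (hg z (interior_subset hz)).hasDerivWithinAt)
      (fun z hz => (hg' z (interior_subset hz)).hasDerivWithinAt)
      (fun z hz => sub_nonneg.2 (hK z (interior_subset hz)))
  linear_combination hconv.add_deriv_mul_sub_le hx hy (hg x hx)

theorem rpow_neg_le_quadratic {α a c x K : ℝ} (hα : 0 ≤ α) (hc : 0 < c) (hca : c ≤ a)
    (hcx : c ≤ x) (hK : c ^ (-α - 2) ≤ K) :
    x ^ (-α) ≤ a ^ (-α) - α * a ^ (-α - 1) * (x - a) + α * (α + 1) / 2 * K * (x - a) ^ 2 := by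
  have hpos : ∀ z ∈ Set.Ici c, z ≠ 0 := fun z hz => (hc.trans_le hz).ne'
  have hderiv2 : ∀ z ∈ Set.Ici c,
      HasDerivAt (fun z => -α * z ^ (-α - 1)) (α * (α + 1) * z ^ (-α - 2)) z := fun z hz => by
    refine ((hasDerivAt_rpow_const (p := -α - 1) (Or.inl (hpos z hz))).const_mul (-α)).congr_deriv
      ?_
    rw [show -α - 1 - 1 = -α - 2 by ring]
    ring
  have hbound : ∀ z ∈ Set.Ici c, α * (α + 1) * z ^ (-α - 2) ≤ α * (α + 1) * K := fun z hz =>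
    mul_le_mul_of_nonneg_left ((rpow_le_rpow_of_nonpos hc hz (by linarith)).trans hK)
      (by positivity)
  linear_combination (convex_Ici c).le_add_deriv_mul_sub_add_sq
    (fun z hz => hasDerivAt_rpow_const (Or.inl (hpos z hz))) hderiv2 hbound hca hcx

theorem rpow_neg_le_div_rpow_mul_rpow_neg {a b c γ : ℝ} (hc : 0 < c) (ha : 0 < a) (hab : a ≤ b)
    (hγ : 0 ≤ γ) : c ^ (-γ) ≤ (b / c) ^ γ * a ^ (-γ) :=
  calc c ^ (-γ) = (a / c) ^ γ * a ^ (-γ) := by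
        rw [div_rpow ha.le hc.le, rpow_neg ha.le, rpow_neg hc.le]
        field_simp
    _ ≤ (b / c) ^ γ * a ^ (-γ) := by gcongr

theorem Matrix.mul_apply_le_mul_sum {R m n o : Type*} [Fintype n] [CommSemiring R] [PartialOrder R]
    [IsOrderedRing R] {S : Matrix m n R} {Z : Matrix n o R} {u : m} {j : o} {z : R}
    (hS : ∀ v, 0 ≤ S u v) (hZ : ∀ v, Z v j ≤ z) : (S * Z) u j ≤ z * ∑ v, S u v := by
  rw [Matrix.mul_apply, mul_sum]
  exact sum_le_sum fun v _ => (mul_le_mul_of_nonneg_left (hZ v) (hS v)).trans_eq (mul_comm _ _)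

theorem sum_div_rpow_mul_rpow_le {ι : Type*} [Fintype ι] (w x : ι → ℝ) {a c α M : ℝ}
    (hα : 0 ≤ α) (hc : 0 < c) (hca : c ≤ a) (hcx : ∀ i, c ≤ x i) (hw : ∀ i, 0 ≤ w i)
    (hwa : ∑ i, w i = a) (hM : c ^ (-α - 2) ≤ M * a ^ (-α - 2)) :
    ∑ i, w i / (a ^ α * x i ^ α) ≤
      a ^ (1 - 2 * α) - α * ((∑ i, w i * (x i - a)) / a) * a ^ (-(2 * α)) +
        α * (α + 1) * M / 2 * ((∑ i, w i * (x i - a) ^ 2) / a) * a ^ (-(1 + 2 * α)) := by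
  have ha : 0 < a := hc.trans_le hca
  have hterm : ∀ i, w i / (a ^ α * x i ^ α) ≤ a ^ (-α) * (w i * (a ^ (-α) -
      α * a ^ (-α - 1) * (x i - a) + α * (α + 1) / 2 * (M * a ^ (-α - 2)) * (x i - a) ^ 2)) := by
    intro i
    have hx : 0 < x i := hc.trans_le (hcx i)
    calc w i / (a ^ α * x i ^ α) = a ^ (-α) * (w i * x i ^ (-α)) := by
          rw [rpow_neg ha.le, rpow_neg hx.le]
          field_simp
      _ ≤ _ := mul_le_mul_of_nonneg_left (mul_le_mul_of_nonneg_left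
          (rpow_neg_le_quadratic hα hc hca (hcx i) hM) (hw i)) (rpow_nonneg ha.le _)
  calc ∑ i, w i / (a ^ α * x i ^ α)
      ≤ ∑ i, a ^ (-α) * (w i * (a ^ (-α) -
          α * a ^ (-α - 1) * (x i - a) + α * (α + 1) / 2 * (M * a ^ (-α - 2)) * (x i - a) ^ 2)) :=
        sum_le_sum fun i _ => hterm i
    _ = a ^ (-α) * (a ^ (-α) * ∑ i, w i - α * a ^ (-α - 1) * ∑ i, w i * (x i - a) +
          α * (α + 1) / 2 * (M * a ^ (-α - 2)) * ∑ i, w i * (x i - a) ^ 2) := by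
        rw [← mul_sum]
        simp only [mul_sum, ← sum_sub_distrib, ← sum_add_distrib]
        exact sum_congr rfl fun i _ => by ring
    _ = _ := by
        rw [hwa, show 1 - 2 * α = -α + -α + 1 by ring, show -(2 * α) = -α + (-α - 1) + 1 by ring,
          show -(1 + 2 * α) = -α + (-α - 2) + 1 by ring, rpow_add_one ha.ne', rpow_add_one ha.ne',
          rpow_add_one ha.ne', rpow_add ha, rpow_add ha, rpow_add ha]
        field_simp

theorem sym_conv_entrywise_bound_general (n p : ℕ)
    (A : Matrix (Fin n) (Fin n) ℝ)
    (hA_nonneg : ∀ u v, 0 ≤ A u v)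
    (β α : ℝ) (hβ : 0 ≤ β) (hα : α ∈ Set.Icc (0 : ℝ) 1)
    (d : Fin n → ℝ) (hd : ∀ u, d u = ∑ v, A u v) (hd1 : ∀ v, 1 ≤ d v)
    (Ahat : Matrix (Fin n) (Fin n) ℝ)
    (hAhat : Ahat = A + β • (1 : Matrix (Fin n) (Fin n) ℝ))
    (S : Matrix (Fin n) (Fin n) ℝ)
    (hS : ∀ u v, S u v = Ahat u v / ((d u + β) ^ α * (d v + β) ^ α))
    (Z : Matrix (Fin n) (Fin p) ℝ) (hZ_nonneg : ∀ v j, 0 ≤ Z v j)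
    (dmax : ℝ) (hdmax : IsGreatest (Set.range d) dmax)
    (M : ℝ) (hM : M = ((dmax + β) / (1 + β)) ^ (α + 2))
    (Zinf : ℝ)
    (hZinf : IsGreatest (Set.range fun vj : Fin n × Fin p => Z vj.1 vj.2) Zinf)
    (Δ₁ Δ₂ : Fin n → ℝ)
    (hΔ₁ : ∀ u, Δ₁ u = (∑ v, Ahat u v * (d v - d u)) / (d u + β))
    (hΔ₂ : ∀ u, Δ₂ u = (∑ v, Ahat u v * (d v - d u) ^ 2) / (d u + β)) :
    ∀ (u : Fin n) (j : Fin p),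
      0 ≤ (S * Z) u j ∧
      (S * Z) u j ≤
        Zinf * ((d u + β) ^ (1 - 2 * α) - α * Δ₁ u * (d u + β) ^ (-(2 * α)) +
          (α * (α + 1) * M / 2) * Δ₂ u * (d u + β) ^ (-(1 + 2 * α))) := by
  intro u j
  have hc : 0 < 1 + β := by linarith
  have hcd : ∀ v, 1 + β ≤ d v + β := fun v => by linarith [hd1 v]
  have hAhat_nonneg : ∀ v, 0 ≤ Ahat u v := fun v => by
    rw [hAhat, Matrix.add_apply, Matrix.smul_apply, Matrix.one_apply]
    split_ifs <;> simp [hA_nonneg, hβ, add_nonneg]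
  have hAhat_sum : ∑ v, Ahat u v = d u + β := by
    simp [hAhat, Matrix.one_apply, sum_add_distrib, hd]
  have hS_nonneg : ∀ v, 0 ≤ S u v := fun v => by
    rw [hS]
    exact div_nonneg (hAhat_nonneg v) (mul_nonneg (rpow_nonneg (hc.le.trans (hcd u)) _)
      (rpow_nonneg (hc.le.trans (hcd v)) _))
  have hM_bound : (1 + β) ^ (-α - 2) ≤ M * (d u + β) ^ (-α - 2) := by
    rw [hM, show -α - 2 = -(α + 2) by ring]
    exact rpow_neg_le_div_rpow_mul_rpow_neg hc (hc.trans_le (hcd u))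
      (by linarith [hdmax.2 ⟨u, rfl⟩]) (by linarith [hα.1])
  have hrow := sum_div_rpow_mul_rpow_le (Ahat u) (fun v => d v + β) hα.1 hc (hcd u) hcd
    hAhat_nonneg hAhat_sum hM_bound
  simp only [add_sub_add_right_eq_sub, ← hS, ← hΔ₁, ← hΔ₂] at hrow
  have hZinf_nonneg : 0 ≤ Zinf := by
    obtain ⟨⟨v₀, j₀⟩, hZinf_eq⟩ := hZinf.1
    exact hZinf_eq ▸ hZ_nonneg v₀ j₀
  refine ⟨?_, ?_⟩
  · rw [Matrix.mul_apply]
    exact sum_nonneg fun v _ => mul_nonneg (hS_nonneg v) (hZ_nonneg v j)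
  · calc (S * Z) u j ≤ Zinf * ∑ v, S u v :=
          Matrix.mul_apply_le_mul_sum hS_nonneg fun v => hZinf.2 ⟨(v, j), rfl⟩
      _ ≤ _ := mul_le_mul_of_nonneg_left hrow hZinf_nonneg

/-- Entrywise version of the row-norm bound for nonnegative features (e.g. ReLU
outputs): every entry of `S Z` is nonnegative and bounded by
`‖Z‖_∞ ((d_u+β)^{1-2α} - α Δ̄_u (d_u+β)^{-2α} + (α(α+1)M/2) Δ̄²_u (d_u+β)^{-1-2α})`. -/
theorem sym_conv_entrywise_bound (n p : ℕ) (hn : 1 ≤ n)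
    (A : Matrix (Fin n) (Fin n) ℝ) (hA_symm : A.IsSymm)
    (hA_nonneg : ∀ u v, 0 ≤ A u v) (hA_diag : ∀ u, A u u = 0)
    (β α : ℝ) (hβ : 0 ≤ β) (hα : α ∈ Set.Icc (0 : ℝ) 1)
    (d : Fin n → ℝ) (hd : ∀ u, d u = ∑ v, A u v) (hd1 : ∀ v, 1 ≤ d v)
    (Ahat : Matrix (Fin n) (Fin n) ℝ)
    (hAhat : Ahat = A + β • (1 : Matrix (Fin n) (Fin n) ℝ))
    (S : Matrix (Fin n) (Fin n) ℝ)
    (hS : ∀ u v, S u v = Ahat u v / ((d u + β) ^ α * (d v + β) ^ α))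
    (Z : Matrix (Fin n) (Fin p) ℝ) (hZ_nonneg : ∀ v j, 0 ≤ Z v j)
    (dmax : ℝ) (hdmax : IsGreatest (Set.range d) dmax)
    (M : ℝ) (hM : M = ((dmax + β) / (1 + β)) ^ (α + 2))
    (Zinf : ℝ)
    (hZinf : IsGreatest (Set.range fun vj : Fin n × Fin p => Z vj.1 vj.2) Zinf)
    (Δ₁ Δ₂ : Fin n → ℝ)
    (hΔ₁ : ∀ u, Δ₁ u = (∑ v, Ahat u v * (d v - d u)) / (d u + β))
    (hΔ₂ : ∀ u, Δ₂ u = (∑ v, Ahat u v * (d v - d u) ^ 2) / (d u + β)) :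
    ∀ (u : Fin n) (j : Fin p),
      0 ≤ (S * Z) u j ∧
      (S * Z) u j ≤
        Zinf * ((d u + β) ^ (1 - 2 * α) - α * Δ₁ u * (d u + β) ^ (-(2 * α)) +
          (α * (α + 1) * M / 2) * Δ₂ u * (d u + β) ^ (-(1 + 2 * α))) :=
  sym_conv_entrywise_bound_general n p A hA_nonneg β α hβ hα d hd hd1 Ahat hAhat S hS Z hZ_nonneg
    dmax hdmax M hM Zinf hZinf Δ₁ Δ₂ hΔ₁ hΔ₂
end

section
/- Let n ≥ 1, let A be an n×n real symmetric matrix with all entries in [0,1] and zero diagonal, let β ∈ [0,1] and α ∈ [0,1], set Â = A + β·I and d_u = Σ_v A_{uv}, and assume d_v ≥ 1 for every node v. Then for every node u, (d_u+β)^{-2α} · Σ_v Â_{uv}² (d_v+β)^{-2α} ≤ (d_u+β)^{1-4α} + 2α·Δ̄ᵃᵇˢ_u·(d_u+β)^{-4α} + α(2α+1)·M·Δ̄²_u·(d_u+β)^{-1-4α}, where Δ̄ᵃᵇˢ_u = Σ_v Â_{uv}|d_v - d_u|/(d_u+β), Δ̄²_u = Σ_v Â_{uv}(d_v - d_u)²/(d_u+β),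 M = ((d_max+β)/(1+β))^{2α+2}, and d_max = max_v d_v. -/
open Real Finset

/-!
Write `x = d_u + β` and `c = 1 + β ≤ d_v + β`. Second-order Taylor expansion of `t ↦ t^{-2α}`
at `x`, with the second derivative on `[c, ∞)` bounded by its value at `c`, gives
`(d_v+β)^{-2α} ≤ x^{-2α} + 2α x^{-2α-1} |d_v - d_u| + α(2α+1) c^{-2α-2} (d_v - d_u)²`,
and `c^{-2α-2} ≤ M x^{-2α-2}` since `x ≤ d_max + β`. Bounding `Â_{uv}²` by `Â_{uv}`, summing
against the row `Â_{u·}` (whose sum is `x`) and multiplying by `x^{-2α}` gives the bound.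
-/

lemma le_of_hasDerivAt_nonneg {g g' : ℝ → ℝ} {a b : ℝ} (hab : a ≤ b)
    (hg : ∀ t ∈ Set.Icc a b, HasDerivAt g (g' t) t) (hg' : ∀ t ∈ Set.Icc a b, 0 ≤ g' t) :
    g a ≤ g b :=
  monotoneOn_of_hasDerivWithinAt_nonneg (convex_Icc a b)
    (fun t ht => (hg t ht).continuousAt.continuousWithinAt)
    (fun t ht => (hg t (interior_subset ht)).hasDerivWithinAt)
    (fun t ht => hg' t (interior_subset ht)) ⟨le_rfl, hab⟩ ⟨hab, le_rfl⟩ hab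

lemma hasDerivAt_rpow_neg {t : ℝ} (ht : 0 < t) (p : ℝ) :
    HasDerivAt (fun s : ℝ => s ^ (-p)) (-p * t ^ (-p - 1)) t := by
  simpa using hasDerivAt_rpow_const (p := -p) (Or.inl ht.ne')

lemma rpow_neg_sub_rpow_neg_le {c x y q : ℝ} (hc : 0 < c) (hq : 0 ≤ q) (hcy : c ≤ y)
    (hyx : y ≤ x) : y ^ (-q) - x ^ (-q) ≤ q * c ^ (-q - 1) * (x - y) := by
  have key := le_of_hasDerivAt_nonneg (g := fun t => t ^ (-q) + q * c ^ (-q - 1) * t) hyx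
    (fun t ht => (hasDerivAt_rpow_neg (hc.trans_le (hcy.trans ht.1)) q).add
      ((hasDerivAt_id t).const_mul _))
    (fun t ht => by
      have : t ^ (-q - 1) ≤ c ^ (-q - 1) :=
        rpow_le_rpow_of_nonpos hc (hcy.trans ht.1) (by linarith)
      linarith [mul_le_mul_of_nonneg_left this hq])
  linarith

lemma rpow_neg_le_taylor_of_le {c x y p : ℝ} (hc : 0 < c) (hp : 0 ≤ p) (hcy : c ≤ y)
    (hyx : y ≤ x) :
    y ^ (-p) ≤ x ^ (-p) + p * x ^ (-p - 1) * (x - y)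
      + p * (p + 1) / 2 * c ^ (-p - 2) * (x - y) ^ 2 := by
  set K := p * (p + 1) / 2 * c ^ (-p - 2)
  have key := le_of_hasDerivAt_nonneg
    (g := fun t => t ^ (-p) + p * x ^ (-p - 1) * t - K * (x - t) ^ 2) hyx
    (fun t ht => ((hasDerivAt_rpow_neg (hc.trans_le (hcy.trans ht.1)) p).add
        ((hasDerivAt_id t).const_mul _)).sub ((((hasDerivAt_id t).const_sub x).pow 2).const_mul K))
    (fun t ht => by
      have h := rpow_neg_sub_rpow_neg_le (q := p + 1) hc (by linarith) (hcy.trans ht.1) ht.2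
      rw [show -(p + 1) = -p - 1 by ring, show -p - 1 - 1 = -p - 2 by ring] at h
      norm_num [K]
      linarith [mul_le_mul_of_nonneg_left h hp])
  norm_num at key
  linarith

lemma rpow_neg_le_taylor {c x y p : ℝ} (hc : 0 < c) (hp : 0 ≤ p) (hcx : c ≤ x) (hcy : c ≤ y) :
    y ^ (-p) ≤ x ^ (-p) + p * x ^ (-p - 1) * |y - x|
      + p * (p + 1) / 2 * c ^ (-p - 2) * (y - x) ^ 2 := by
  rcases le_total x y with hxy | hyx
  · have : y ^ (-p) ≤ x ^ (-p) := rpow_le_rpow_of_nonpos (hc.trans_le hcx) hxy (by linarith)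
    have : 0 ≤ p * x ^ (-p - 1) * |y - x| :=
      mul_nonneg (mul_nonneg hp (rpow_nonneg (hc.le.trans hcx) _)) (abs_nonneg _)
    have : 0 ≤ p * (p + 1) / 2 * c ^ (-p - 2) * (y - x) ^ 2 :=
      mul_nonneg (mul_nonneg (by positivity) (rpow_nonneg hc.le _)) (sq_nonneg _)
    linarith
  · rw [abs_of_nonpos (sub_nonpos.2 hyx), neg_sub, ← neg_sub x y, neg_sq]
    exact rpow_neg_le_taylor_of_le hc hp hcy hyx

lemma sum_sq_mul_rpow_neg_le {ι : Type*} [Fintype ι] {w y : ι → ℝ} {c x p : ℝ} (hc : 0 < c)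
    (hp : 0 ≤ p) (hw : ∀ v, w v ∈ Set.Icc (0 : ℝ) 1) (hcx : c ≤ x) (hcy : ∀ v, c ≤ y v) :
    ∑ v, w v ^ 2 * y v ^ (-p) ≤ x ^ (-p) * ∑ v, w v + p * x ^ (-p - 1) * ∑ v, w v * |y v - x|
      + p * (p + 1) / 2 * c ^ (-p - 2) * ∑ v, w v * (y v - x) ^ 2 := by
  calc ∑ v, w v ^ 2 * y v ^ (-p)
      ≤ ∑ v, w v * (x ^ (-p) + p * x ^ (-p - 1) * |y v - x|
          + p * (p + 1) / 2 * c ^ (-p - 2) * (y v - x) ^ 2) := by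
        refine sum_le_sum fun v _ => ?_
        obtain ⟨hw0, hw1⟩ := hw v
        have hsq : w v ^ 2 ≤ w v := by nlinarith
        calc w v ^ 2 * y v ^ (-p) ≤ w v * y v ^ (-p) :=
              mul_le_mul_of_nonneg_right hsq (rpow_nonneg (hc.le.trans (hcy v)) _)
          _ ≤ _ := mul_le_mul_of_nonneg_left (rpow_neg_le_taylor hc hp hcx (hcy v)) hw0
    _ = _ := by
        simp only [mul_sum, ← sum_add_distrib]
        exact sum_congr rfl fun v _ => by ring

lemma rpow_neg_le_div_rpow_mul_rpow_neg_s10 {c x D r : ℝ} (hc : 0 < c) (hcx : c ≤ x) (hxD : x ≤ D)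
    (hr : 0 ≤ r) : c ^ (-r) ≤ (D / c) ^ r * x ^ (-r) := by
  have hx : 0 < x := hc.trans_le hcx
  have hxD' : 1 ≤ D ^ r * x ^ (-r) := by
    rw [rpow_neg hx.le, ← div_eq_mul_inv, one_le_div (rpow_pos_of_pos hx r)]
    exact rpow_le_rpow hx.le hxD hr
  calc c ^ (-r) ≤ D ^ r * x ^ (-r) * c ^ (-r) :=
        le_mul_of_one_le_left (rpow_nonneg hc.le _) hxD'
    _ = (D / c) ^ r * x ^ (-r) := by
        rw [div_rpow (hx.le.trans hxD) hc.le, rpow_neg hc.le]; ring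

lemma rpow_neg_mul_sum_sq_mul_rpow_neg_le {ι : Type*} [Fintype ι] {w y : ι → ℝ} {c x D p : ℝ}
    (hc : 0 < c) (hp : 0 ≤ p) (hw : ∀ v, w v ∈ Set.Icc (0 : ℝ) 1) (hwx : ∑ v, w v = x)
    (hcy : ∀ v, c ≤ y v) (hcx : c ≤ x) (hxD : x ≤ D) :
    x ^ (-p) * ∑ v, w v ^ 2 * y v ^ (-p) ≤
      x ^ (1 - 2 * p) + p * ((∑ v, w v * |y v - x|) / x) * x ^ (-(2 * p))
        + p * (p + 1) / 2 * (D / c) ^ (p + 2) * ((∑ v, w v * (y v - x) ^ 2) / x)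
          * x ^ (-(1 + 2 * p)) := by
  have hx : 0 < x := hc.trans_le hcx
  have hD : c ^ (-p - 2) ≤ (D / c) ^ (p + 2) * x ^ (-p - 2) := by
    have h := rpow_neg_le_div_rpow_mul_rpow_neg_s10 hc hcx hxD (by linarith : 0 ≤ p + 2)
    rwa [neg_add'] at h
  have hsum := sum_sq_mul_rpow_neg_le hc hp hw hcx hcy
  have hS₂ : 0 ≤ ∑ v, w v * (y v - x) ^ 2 :=
    sum_nonneg fun v _ => mul_nonneg (hw v).1 (sq_nonneg _)
  set s := x ^ (-p)
  have e1 : x ^ (-p - 1) = s / x := rpow_sub_one hx.ne' _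
  have e2 : x ^ (-p - 2) = s / x ^ 2 := by rw [rpow_sub hx, rpow_two]
  have e3 : x ^ (1 - 2 * p) = s * s * x := by
    rw [show 1 - 2 * p = -p + -p + 1 by ring, rpow_add hx, rpow_add hx, rpow_one]
  have e4 : x ^ (-(2 * p)) = s * s := by
    rw [show -(2 * p) = -p + -p by ring, rpow_add hx]
  have e5 : x ^ (-(1 + 2 * p)) = s * s / x := by
    rw [show -(1 + 2 * p) = -p + -p - 1 by ring, rpow_sub_one hx.ne', rpow_add hx]
  rw [hwx, e1] at hsum
  rw [e2] at hD
  calc s * ∑ v, w v ^ 2 * y v ^ (-p)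
      ≤ s * (s * x + p * (s / x) * ∑ v, w v * |y v - x|
          + p * (p + 1) / 2 * c ^ (-p - 2) * ∑ v, w v * (y v - x) ^ 2) :=
        mul_le_mul_of_nonneg_left hsum (by positivity)
    _ ≤ s * (s * x + p * (s / x) * ∑ v, w v * |y v - x|
          + p * (p + 1) / 2 * ((D / c) ^ (p + 2) * (s / x ^ 2))
            * ∑ v, w v * (y v - x) ^ 2) := by gcongr
    _ = _ := by
        rw [e3, e4, e5]
        field_simp

lemma Matrix.add_smul_one_apply_mem_Icc {ι : Type*} [DecidableEq ι] {A : Matrix ι ι ℝ} {β : ℝ}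
    (hA : ∀ u v, A u v ∈ Set.Icc (0 : ℝ) 1) (hA_diag : ∀ u, A u u = 0)
    (hβ : β ∈ Set.Icc (0 : ℝ) 1) (u v : ι) : (A + β • 1) u v ∈ Set.Icc (0 : ℝ) 1 := by
  rcases eq_or_ne u v with rfl | huv
  · simpa [hA_diag] using hβ
  · simpa [Matrix.one_apply_ne huv] using hA u v

lemma Matrix.sum_add_smul_one_apply {ι R : Type*} [Fintype ι] [DecidableEq ι] [Semiring R]
    (A : Matrix ι ι R) (β : R) (u : ι) : ∑ v, (A + β • 1) u v = ∑ v, A u v + β := by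
  simp [sum_add_distrib, Matrix.one_apply]

theorem sym_conv_mean_sq_distance_bound_general (n : ℕ)
    (A : Matrix (Fin n) (Fin n) ℝ)
    (hA_mem : ∀ u v, A u v ∈ Set.Icc (0 : ℝ) 1) (hA_diag : ∀ u, A u u = 0)
    (β α : ℝ) (hβ : β ∈ Set.Icc (0 : ℝ) 1) (hα : α ∈ Set.Icc (0 : ℝ) 1)
    (d : Fin n → ℝ) (hd : ∀ u, d u = ∑ v, A u v) (hd1 : ∀ v, 1 ≤ d v)
    (Ahat : Matrix (Fin n) (Fin n) ℝ)
    (hAhat : Ahat = A + β • (1 : Matrix (Fin n) (Fin n) ℝ))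
    (dmax : ℝ) (hdmax : IsGreatest (Set.range d) dmax)
    (M : ℝ) (hM : M = ((dmax + β) / (1 + β)) ^ (2 * α + 2))
    (Δabs Δ₂ : Fin n → ℝ)
    (hΔabs : ∀ u, Δabs u = (∑ v, Ahat u v * |d v - d u|) / (d u + β))
    (hΔ₂ : ∀ u, Δ₂ u = (∑ v, Ahat u v * (d v - d u) ^ 2) / (d u + β)) :
    ∀ u : Fin n,
      (d u + β) ^ (-(2 * α)) * ∑ v, (Ahat u v) ^ 2 * (d v + β) ^ (-(2 * α)) ≤
        (d u + β) ^ (1 - 4 * α) + 2 * α * Δabs u * (d u + β) ^ (-(4 * α)) +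
          α * (2 * α + 1) * M * Δ₂ u * (d u + β) ^ (-(1 + 4 * α)) := by
  intro u
  subst hAhat
  have hcy : ∀ v, 1 + β ≤ d v + β := fun v => by linarith [hd1 v]
  have key := rpow_neg_mul_sum_sq_mul_rpow_neg_le
    (y := fun v => d v + β) (D := dmax + β) (p := 2 * α)
    (by linarith [hβ.1]) (by linarith [hα.1])
    (Matrix.add_smul_one_apply_mem_Icc hA_mem hA_diag hβ u)
    (by rw [Matrix.sum_add_smul_one_apply, hd]) hcy (hcy u)
    (by linarith [hdmax.2 ⟨u, rfl⟩])
  simp only [add_sub_add_right_eq_sub] at key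
  rw [hΔabs, hΔ₂, hM, show 4 * α = 2 * (2 * α) by ring,
    show α * (2 * α + 1) = 2 * α * (2 * α + 1) / 2 by ring]
  exact key

/-- Deterministic bound on the mean squared distance between the symmetrized-convolution
embeddings of structurally equivalent nodes: with entries of `A` in `[0,1]`,
`β ∈ [0,1]`, degrees `d_v ≥ 1`, for every node `u`,
`(d_u+β)^{-2α} Σ_v Â_{uv}² (d_v+β)^{-2α} ≤ (d_u+β)^{1-4α} + 2α Δ̄ᵃᵇˢ_u (d_u+β)^{-4α}
  + α(2α+1) M Δ̄²_u (d_u+β)^{-1-4α}`. -/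
theorem sym_conv_mean_sq_distance_bound (n : ℕ) (hn : 1 ≤ n)
    (A : Matrix (Fin n) (Fin n) ℝ) (hA_symm : A.IsSymm)
    (hA_mem : ∀ u v, A u v ∈ Set.Icc (0 : ℝ) 1) (hA_diag : ∀ u, A u u = 0)
    (β α : ℝ) (hβ : β ∈ Set.Icc (0 : ℝ) 1) (hα : α ∈ Set.Icc (0 : ℝ) 1)
    (d : Fin n → ℝ) (hd : ∀ u, d u = ∑ v, A u v) (hd1 : ∀ v, 1 ≤ d v)
    (Ahat : Matrix (Fin n) (Fin n) ℝ)
    (hAhat : Ahat = A + β • (1 : Matrix (Fin n) (Fin n) ℝ))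
    (dmax : ℝ) (hdmax : IsGreatest (Set.range d) dmax)
    (M : ℝ) (hM : M = ((dmax + β) / (1 + β)) ^ (2 * α + 2))
    (Δabs Δ₂ : Fin n → ℝ)
    (hΔabs : ∀ u, Δabs u = (∑ v, Ahat u v * |d v - d u|) / (d u + β))
    (hΔ₂ : ∀ u, Δ₂ u = (∑ v, Ahat u v * (d v - d u) ^ 2) / (d u + β)) :
    ∀ u : Fin n,
      (d u + β) ^ (-(2 * α)) * ∑ v, (Ahat u v) ^ 2 * (d v + β) ^ (-(2 * α)) ≤
        (d u + β) ^ (1 - 4 * α) + 2 * α * Δabs u * (d u + β) ^ (-(4 * α)) +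
          α * (2 * α + 1) * M * Δ₂ u * (d u + β) ^ (-(1 + 4 * α)) :=
  sym_conv_mean_sq_distance_bound_general n A hA_mem hA_diag β α hβ hα d hd hd1 Ahat hAhat dmax
    hdmax M hM Δabs Δ₂ hΔabs hΔ₂
end

section
/- Let n ≥ 1, let A be an n×n real symmetric matrix with nonnegative entries and zero diagonal, let β ≥ 0 and α ∈ [0,1], set Â = A + β·I and d_u = Σ_v A_{uv} with d_u + β > 0 for all u, and let S be the symmetrized convolution operator S_{uv} = Â_{uv}/((d_u+β)^α (d_v+β)^α). Let u and u' be two nodes and let X ∈ ℝ^{n×p} be such that X_v = x̄ for a fixed vector x̄ ∈ ℝ^p, for every v with Â_{uv} > 0 and every v with Â_{u'v} > 0. Then ‖(SX)_u - (SX)_{u'}‖ = |c_u - c_{u'}|·‖x̄‖, where c_w = Σ_v Â_{wv}/((d_w+β)^α (d_v+β)^α); in particular the distance between the two embeddings is determined solely by the topology of the two neighborhoods. -/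
open Real Finset

/-! If every node in the support of row `w` of `S` carries the feature `x̄`, then row `w` of
`S X` is `x̄` scaled by the row sum of `S`. For the symmetrized convolution the support of row `w`
is the closed neighbourhood of `w` (as `Â ≥ 0`), and its row sum is `c_w`; so
`(S X)_u - (S X)_{u'} = (c_u - c_{u'}) x̄`. -/

theorem Matrix.mul_apply_eq_sum_mul_of_eq_on_support {m l o R : Type*} [Fintype l]
    [NonUnitalNonAssocSemiring R] (M : Matrix m l R) (X : Matrix l o R) (w : m) (xbar : o → R)
    (hX : ∀ v, M w v ≠ 0 → X v = xbar) (j : o) :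
    (M * X) w j = (∑ v, M w v) * xbar j := by
  rw [Matrix.mul_apply, Finset.sum_mul]
  refine Finset.sum_congr rfl fun v _ => ?_
  by_cases hv : M w v = 0
  · simp [hv]
  · rw [hX v hv]

theorem Matrix.add_smul_one_nonneg {n R : Type*} [DecidableEq n] [Semiring R] [PartialOrder R]
    [IsOrderedRing R] (A : Matrix n n R) (hA : ∀ u v, 0 ≤ A u v) {β : R} (hβ : 0 ≤ β)
    (u v : n) : 0 ≤ (A + β • (1 : Matrix n n R)) u v := by
  rw [Matrix.add_apply, Matrix.smul_apply, Matrix.one_apply, smul_eq_mul]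
  split_ifs
  · simpa using add_nonneg (hA u v) hβ
  · simpa using hA u v

theorem Real.sqrt_sum_mul_sq {ι : Type*} (s : Finset ι) (r : ℝ) (x : ι → ℝ) :
    √(∑ j ∈ s, (r * x j) ^ 2) = |r| * √(∑ j ∈ s, x j ^ 2) := by
  simp_rw [mul_pow]
  rw [← Finset.mul_sum, Real.sqrt_mul (sq_nonneg r), Real.sqrt_sq_eq_abs]

theorem sym_conv_constant_features_distance_general (n p : ℕ)
    (A : Matrix (Fin n) (Fin n) ℝ)
    (hA_nonneg : ∀ u v, 0 ≤ A u v)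
    (β α : ℝ) (hβ : 0 ≤ β)
    (d : Fin n → ℝ)
    (Ahat : Matrix (Fin n) (Fin n) ℝ)
    (hAhat : Ahat = A + β • (1 : Matrix (Fin n) (Fin n) ℝ))
    (S : Matrix (Fin n) (Fin n) ℝ)
    (hS : ∀ u v, S u v = Ahat u v / ((d u + β) ^ α * (d v + β) ^ α))
    (u u' : Fin n)
    (X : Matrix (Fin n) (Fin p) ℝ) (xbar : Fin p → ℝ)
    (hX : ∀ v : Fin n, (0 < Ahat u v ∨ 0 < Ahat u' v) → (∀ j, X v j = xbar j))
    (c : Fin n → ℝ)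
    (hc : ∀ w, c w = ∑ v, Ahat w v / ((d w + β) ^ α * (d v + β) ^ α)) :
    Real.sqrt (∑ j, ((S * X) u j - (S * X) u' j) ^ 2) =
      |c u - c u'| * Real.sqrt (∑ j, (xbar j) ^ 2) := by
  have hAhat_nonneg : ∀ w v, 0 ≤ Ahat w v := hAhat ▸ A.add_smul_one_nonneg hA_nonneg hβ
  have hc_rowSum : ∀ w, c w = ∑ v, S w v := by simp [hc, hS]
  have hrow : ∀ w, (∀ v, 0 < Ahat w v → X v = xbar) → ∀ j, (S * X) w j = c w * xbar j := by
    intro w hw j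
    rw [hc_rowSum, S.mul_apply_eq_sum_mul_of_eq_on_support X w xbar]
    intro v hSv
    refine hw v ((hAhat_nonneg w v).lt_of_ne' fun h0 => hSv ?_)
    rw [hS, h0, zero_div]
  have hu := hrow u fun v hv => funext (hX v (Or.inl hv))
  have hu' := hrow u' fun v hv => funext (hX v (Or.inr hv))
  simp_rw [hu, hu', ← sub_mul]
  exact Real.sqrt_sum_mul_sq _ _ _

/-- Symmetrized convolutions encode topology: if all nodes in the closed neighborhoods
of `u` and `u'` have the same feature vector `x̄`, then
`‖(SX)_u - (SX)_{u'}‖ = |c_u - c_{u'}| ‖x̄‖`, where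
`c_w = Σ_v Â_{wv}/((d_w+β)^α (d_v+β)^α)` depends only on the topology. -/
theorem sym_conv_constant_features_distance (n p : ℕ) (hn : 1 ≤ n)
    (A : Matrix (Fin n) (Fin n) ℝ) (hA_symm : A.IsSymm)
    (hA_nonneg : ∀ u v, 0 ≤ A u v) (hA_diag : ∀ u, A u u = 0)
    (β α : ℝ) (hβ : 0 ≤ β) (hα : α ∈ Set.Icc (0 : ℝ) 1)
    (d : Fin n → ℝ) (hd : ∀ u, d u = ∑ v, A u v) (hdpos : ∀ u, 0 < d u + β)
    (Ahat : Matrix (Fin n) (Fin n) ℝ)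
    (hAhat : Ahat = A + β • (1 : Matrix (Fin n) (Fin n) ℝ))
    (S : Matrix (Fin n) (Fin n) ℝ)
    (hS : ∀ u v, S u v = Ahat u v / ((d u + β) ^ α * (d v + β) ^ α))
    (u u' : Fin n)
    (X : Matrix (Fin n) (Fin p) ℝ) (xbar : Fin p → ℝ)
    (hX : ∀ v : Fin n, (0 < Ahat u v ∨ 0 < Ahat u' v) → (∀ j, X v j = xbar j))
    (c : Fin n → ℝ)
    (hc : ∀ w, c w = ∑ v, Ahat w v / ((d w + β) ^ α * (d v + β) ^ α)) :
    Real.sqrt (∑ j, ((S * X) u j - (S * X) u' j) ^ 2) =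
      |c u - c u'| * Real.sqrt (∑ j, (xbar j) ^ 2) :=
  sym_conv_constant_features_distance_general n p A hA_nonneg β α hβ d Ahat hAhat S hS u u' X xbar
    hX c hc
end
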